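/- Let ψ be a branching mechanism with δ = δ_ψ > 1 and define v: (0,∞) → (0,∞) by ∫_{v(a)}^∞ du/ψ(u) = a. Then there exist r₁, C₁ ∈ (0,∞), depending only on ψ, such that v(r) < C₁ r φ⁻¹(1/r) for all r ∈ (0, r₁), where φ = ψ' ∘ ψ⁻¹. -/

import Mathlib

open MeasureTheory Real Set

/-!
Put `λ = v(r) / s` for a large constant `s`. Weak lower scaling with index `c > 1` gives
`r = ∫_{sλ}^∞ du / ψ(u) ≤ sλ / ((c - 1) Q ψ(sλ)) ≤ λ / (4 ψ(λ))`. Let `ℓ = ψ⁻¹(φ⁻¹(1/r))`, so that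
`ψ'(ℓ) = 1/r`. From the Lévy–Khintchine form, `ψ'` is nondecreasing, `(λ/2) ψ'(λ/2) ≤ ψ(λ)` and
`ℓ ψ'(ℓ) ≤ 4 ψ(ℓ)`. If `λ > 2ℓ` the first two give `λ / (2r) ≤ ψ(λ) ≤ λ / (4r)`, which is absurd;
so `λ ≤ 2ℓ ≤ 8 r ψ(ℓ) = 8 r φ⁻¹(1/r)` and `v(r) = sλ ≤ 8 s r φ⁻¹(1/r)`.
-/

section ExpInequalities

variable {x : ℝ}

lemma exp_neg_sub_one_add_nonneg (x : ℝ) : 0 ≤ exp (-x) - 1 + x := by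
  linarith [one_sub_le_exp_neg x]

lemma one_sub_exp_neg_nonneg (hx : 0 ≤ x) : 0 ≤ 1 - exp (-x) := by
  simpa using exp_le_one_iff.2 (neg_nonpos.2 hx)

lemma exp_neg_mul_one_add_le_one (x : ℝ) : exp (-x) * (1 + x) ≤ 1 := by
  have h : exp (-x) * exp x = 1 := by rw [← exp_add, neg_add_cancel, exp_zero]
  nlinarith [add_one_le_exp x, exp_pos (-x)]

lemma exp_neg_sub_one_add_le_mul_one_sub_exp_neg (x : ℝ) :
    exp (-x) - 1 + x ≤ x * (1 - exp (-x)) := by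
  nlinarith [exp_neg_mul_one_add_le_one x]

lemma mul_one_sub_exp_neg_le_exp_neg_two_mul (x : ℝ) :
    x * (1 - exp (-x)) ≤ exp (-(2 * x)) - 1 + 2 * x := by
  have h : exp (-(2 * x)) = exp (-x) * exp (-x) := by rw [← exp_add]; ring_nf
  rw [h]
  nlinarith [mul_nonneg (sub_nonneg.2 (one_sub_le_exp_neg x)) (add_pos one_pos (exp_pos (-x))).le]

-- Equivalently, `tanh (x / 2) ≤ x / 2`.
lemma two_mul_one_sub_exp_neg_le (hx : 0 ≤ x) : 2 * (1 - exp (-x)) ≤ x * (1 + exp (-x)) := by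
  let h : ℝ → ℝ := fun y => y * (1 + exp (-y)) - 2 * (1 - exp (-y))
  have hderiv (y : ℝ) : HasDerivAt h (exp (-y) * (exp y - 1 - y)) y := by
    have he : HasDerivAt (fun y => exp (-y)) (-exp (-y)) y := by
      simpa using (hasDerivAt_neg y).exp
    refine (((hasDerivAt_id y).mul (he.const_add 1)).sub
      ((he.const_sub 1).const_mul 2)).congr_deriv ?_
    rw [mul_sub, mul_sub, ← exp_add, neg_add_cancel, exp_zero, id]
    ring
  have hmono : MonotoneOn h (Ici 0) :=
    monotoneOn_of_deriv_nonneg (convex_Ici 0)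
      (fun y _ => (hderiv y).continuousAt.continuousWithinAt)
      (fun y _ => (hderiv y).differentiableAt.differentiableWithinAt)
      fun y _ => by
        rw [(hderiv y).deriv]
        exact mul_nonneg (exp_pos _).le (by linarith [add_one_le_exp y])
  have := hmono self_mem_Ici hx hx
  simp only [h, neg_zero, exp_zero] at this
  linarith

lemma mul_one_sub_exp_neg_le_four_mul (hx : 0 ≤ x) :
    x * (1 - exp (-x)) ≤ 4 * (exp (-x) - 1 + x) := by
  nlinarith [two_mul_one_sub_exp_neg_le hx, exp_le_one_iff.2 (neg_nonpos.2 hx)]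

lemma mul_one_sub_exp_neg_mul_le_max_mul_min (l : ℝ) {r : ℝ} (hr : 0 < r) :
    r * (1 - exp (-(l * r))) ≤ max 1 l * min r (r ^ 2) := by
  have h1 : 1 - exp (-(l * r)) ≤ 1 := by linarith [exp_pos (-(l * r))]
  have hlr : 1 - exp (-(l * r)) ≤ l * r := by linarith [one_sub_le_exp_neg (l * r)]
  rcases le_total r 1 with hr1 | hr1
  · rw [min_eq_right (by nlinarith)]
    nlinarith [le_max_right 1 l]
  · rw [min_eq_left (by nlinarith)]
    nlinarith [le_max_left 1 l]

lemma mul_one_sub_exp_neg_mul_le_of_le {x y r : ℝ} (hr : 0 ≤ r) (hxy : x ≤ y) :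
    r * (1 - exp (-(x * r))) ≤ r * (1 - exp (-(y * r))) := by
  have : exp (-(y * r)) ≤ exp (-(x * r)) := exp_le_exp.2 (by nlinarith)
  nlinarith

end ExpInequalities

structure IsBranchingLevyMeasure (ν : Measure ℝ) : Prop where
  measure_Iic_zero : ν (Iic 0) = 0
  integrable_min_sq : Integrable (fun r => min r (r ^ 2)) ν

noncomputable def branchingMechanism (α β : ℝ) (ν : Measure ℝ) (l : ℝ) : ℝ :=
  α * l + β * l ^ 2 + ∫ r, (exp (-(l * r)) - 1 + l * r) ∂ν

noncomputable def branchingMechanismDeriv (α β : ℝ) (ν : Measure ℝ) (l : ℝ) : ℝ :=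
  α + 2 * β * l + ∫ r, r * (1 - exp (-(l * r))) ∂ν

namespace IsBranchingLevyMeasure

variable {ν : Measure ℝ} {l : ℝ}

lemma ae_pos (hν : IsBranchingLevyMeasure ν) : ∀ᵐ r ∂ν, 0 < r := by
  rw [ae_iff]
  simpa [Iic] using hν.measure_Iic_zero

lemma integrable_mul_one_sub_exp_neg (hν : IsBranchingLevyMeasure ν) (hl : 0 ≤ l) :
    Integrable (fun r => r * (1 - exp (-(l * r)))) ν := by
  refine (hν.integrable_min_sq.const_mul (max 1 l)).mono' (by fun_prop) ?_
  filter_upwards [hν.ae_pos] with r hr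
  rw [norm_of_nonneg (mul_nonneg hr.le (one_sub_exp_neg_nonneg (by positivity)))]
  exact mul_one_sub_exp_neg_mul_le_max_mul_min l hr

lemma integrable_exp_neg_sub_one_add (hν : IsBranchingLevyMeasure ν) (hl : 0 ≤ l) :
    Integrable (fun r => exp (-(l * r)) - 1 + l * r) ν := by
  refine ((hν.integrable_mul_one_sub_exp_neg hl).const_mul l).mono' (by fun_prop) ?_
  filter_upwards with r
  rw [norm_of_nonneg (exp_neg_sub_one_add_nonneg _), ← mul_assoc]
  exact exp_neg_sub_one_add_le_mul_one_sub_exp_neg _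

end IsBranchingLevyMeasure

section BranchingMechanism

variable {α β : ℝ} {ν : Measure ℝ}

lemma hasDerivAt_integral_exp_neg_sub_one_add (hν : IsBranchingLevyMeasure ν) {l : ℝ}
    (hl : 0 < l) :
    HasDerivAt (fun x => ∫ r, (exp (-(x * r)) - 1 + x * r) ∂ν)
      (∫ r, r * (1 - exp (-(l * r))) ∂ν) l := by
  refine (hasDerivAt_integral_of_dominated_loc_of_deriv_le
    (F := fun x r => exp (-(x * r)) - 1 + x * r) (F' := fun x r => r * (1 - exp (-(x * r))))
    (bound := fun r => r * (1 - exp (-(2 * l * r))))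
    (Metric.ball_mem_nhds l hl) (.of_forall fun x => by fun_prop)
    (hν.integrable_exp_neg_sub_one_add hl.le) (by fun_prop) ?_
    (hν.integrable_mul_one_sub_exp_neg (by positivity)) ?_).2
  · filter_upwards [hν.ae_pos] with r hr x hx
    rw [Metric.mem_ball, dist_eq, abs_lt] at hx
    rw [norm_of_nonneg (mul_nonneg hr.le (one_sub_exp_neg_nonneg (by nlinarith)))]
    exact mul_one_sub_exp_neg_mul_le_of_le hr.le (by linarith)
  · filter_upwards with r x _
    refine ((((hasDerivAt_mul_const r).neg.exp.sub_const 1).add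
      (hasDerivAt_mul_const r))).congr_deriv ?_
    simp only [Pi.neg_apply]
    ring

lemma hasDerivAt_branchingMechanism (hν : IsBranchingLevyMeasure ν) {l : ℝ} (hl : 0 < l) :
    HasDerivAt (branchingMechanism α β ν) (branchingMechanismDeriv α β ν l) l := by
  have hquad : HasDerivAt (fun x => α * x + β * x ^ 2) (α + 2 * β * l) l := by
    refine (((hasDerivAt_id l).const_mul α).add ((hasDerivAt_pow 2 l).const_mul β)).congr_deriv ?_
    ring
  exact hquad.add (hasDerivAt_integral_exp_neg_sub_one_add hν hl)

lemma branchingMechanismDeriv_le_of_le (hβ : 0 ≤ β) (hν : IsBranchingLevyMeasure ν) {a b : ℝ}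
    (ha : 0 ≤ a) (hab : a ≤ b) :
    branchingMechanismDeriv α β ν a ≤ branchingMechanismDeriv α β ν b := by
  have hint : ∫ r, r * (1 - exp (-(a * r))) ∂ν ≤ ∫ r, r * (1 - exp (-(b * r))) ∂ν :=
    integral_mono_ae (hν.integrable_mul_one_sub_exp_neg ha)
      (hν.integrable_mul_one_sub_exp_neg (ha.trans hab))
      (by filter_upwards [hν.ae_pos] with r hr using mul_one_sub_exp_neg_mul_le_of_le hr.le hab)
  unfold branchingMechanismDeriv
  nlinarith

lemma mul_branchingMechanismDeriv_le (hα : 0 ≤ α) (hβ : 0 ≤ β) (hν : IsBranchingLevyMeasure ν)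
    {l : ℝ} (hl : 0 ≤ l) :
    l * branchingMechanismDeriv α β ν l ≤ 4 * branchingMechanism α β ν l := by
  have hint : ∫ r, l * (r * (1 - exp (-(l * r)))) ∂ν ≤
      ∫ r, 4 * (exp (-(l * r)) - 1 + l * r) ∂ν := by
    refine integral_mono_ae ((hν.integrable_mul_one_sub_exp_neg hl).const_mul l)
      ((hν.integrable_exp_neg_sub_one_add hl).const_mul 4) ?_
    filter_upwards [hν.ae_pos] with r hr
    rw [← mul_assoc]
    exact mul_one_sub_exp_neg_le_four_mul (by positivity)
  rw [integral_const_mul, integral_const_mul] at hint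
  unfold branchingMechanism branchingMechanismDeriv
  nlinarith [mul_nonneg hα hl, mul_nonneg hβ (sq_nonneg l)]

lemma half_mul_branchingMechanismDeriv_half_le (hα : 0 ≤ α) (hβ : 0 ≤ β)
    (hν : IsBranchingLevyMeasure ν) {l : ℝ} (hl : 0 ≤ l) :
    l / 2 * branchingMechanismDeriv α β ν (l / 2) ≤ branchingMechanism α β ν l := by
  have hint : ∫ r, l / 2 * (r * (1 - exp (-(l / 2 * r)))) ∂ν ≤
      ∫ r, (exp (-(l * r)) - 1 + l * r) ∂ν := by
    refine integral_mono ((hν.integrable_mul_one_sub_exp_neg (by positivity)).const_mul _)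
      (hν.integrable_exp_neg_sub_one_add hl) fun r => ?_
    have h := mul_one_sub_exp_neg_le_exp_neg_two_mul (l / 2 * r)
    rw [show 2 * (l / 2 * r) = l * r by ring] at h
    exact (mul_assoc _ _ _).symm.trans_le h
  rw [integral_const_mul] at hint
  unfold branchingMechanism branchingMechanismDeriv
  nlinarith [mul_nonneg hα hl, mul_nonneg hβ (sq_nonneg l)]

lemma branchingMechanism_eq_zero_or_pos (hα : 0 ≤ α) (hβ : 0 ≤ β)
    (hν : IsBranchingLevyMeasure ν) :
    (∀ l, branchingMechanism α β ν l = 0) ∨ ∀ l, 0 < l → 0 < branchingMechanism α β ν l := by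
  by_cases htriv : α = 0 ∧ β = 0 ∧ ν = 0
  · obtain ⟨rfl, rfl, rfl⟩ := htriv
    exact Or.inl fun l => by simp [branchingMechanism]
  refine Or.inr fun l hl => ?_
  have hint : 0 ≤ ∫ r, (exp (-(l * r)) - 1 + l * r) ∂ν :=
    integral_nonneg fun r => exp_neg_sub_one_add_nonneg _
  unfold branchingMechanism
  rcases hα.lt_or_eq with hα | rfl
  · nlinarith [mul_pos hα hl, mul_nonneg hβ (sq_nonneg l)]
  rcases hβ.lt_or_eq with hβ | rfl
  · nlinarith [mul_pos hβ (pow_pos hl 2)]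
  have hν0 : ν ≠ 0 := by tauto
  suffices 0 < ∫ r, (exp (-(l * r)) - 1 + l * r) ∂ν by simpa using this
  refine (integral_pos_iff_support_of_nonneg (fun r => exp_neg_sub_one_add_nonneg _)
    (hν.integrable_exp_neg_sub_one_add hl.le)).2 (pos_iff_ne_zero.2 fun h0 => hν0 ?_)
  rw [← ae_eq_bot, ← Filter.eventually_false_iff_eq_bot]
  filter_upwards [measure_eq_zero_iff_ae_notMem.1 h0, hν.ae_pos] with r hr hr0
  refine hr (ne_of_gt ?_)
  linarith [add_one_lt_exp (neg_ne_zero.2 (mul_pos hl hr0).ne')]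

lemma le_eight_mul_of_branchingMechanismDeriv_eq_inv (hα : 0 ≤ α) (hβ : 0 ≤ β)
    (hν : IsBranchingLevyMeasure ν) {ℓ r lam : ℝ} (hℓ : 0 < ℓ) (hr : 0 < r)
    (hderiv : branchingMechanismDeriv α β ν ℓ = 1 / r)
    (hquarter : r * branchingMechanism α β ν lam ≤ lam / 4) :
    lam ≤ 8 * r * branchingMechanism α β ν ℓ := by
  have hlam : lam ≤ 2 * ℓ := by
    by_contra! hlt
    have hmono : 1 / r ≤ branchingMechanismDeriv α β ν (lam / 2) :=
      hderiv ▸ branchingMechanismDeriv_le_of_le hβ hν hℓ.le (by linarith)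
    have hhalf := half_mul_branchingMechanismDeriv_half_le hα hβ hν (l := lam) (by linarith)
    have : lam / 2 ≤ r * branchingMechanism α β ν lam := by
      calc lam / 2 = r * (lam / 2 * (1 / r)) := by field_simp
        _ ≤ r * branchingMechanism α β ν lam := by gcongr; nlinarith
    linarith
  have hℓ4 : ℓ ≤ 4 * r * branchingMechanism α β ν ℓ := by
    have h := mul_branchingMechanismDeriv_le hα hβ hν hℓ.le
    rw [hderiv] at h
    calc ℓ = r * (ℓ * (1 / r)) := by field_simp
      _ ≤ 4 * r * branchingMechanism α β ν ℓ := by nlinarith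
  linarith

lemma HasDerivAt.eq_branchingMechanismDeriv {ψ : ℝ → ℝ} {d l : ℝ}
    (hν : IsBranchingLevyMeasure ν) (hψ : ∀ x, 0 ≤ x → ψ x = branchingMechanism α β ν x)
    (hl : 0 < l) (h : HasDerivAt ψ d l) :
    d = branchingMechanismDeriv α β ν l :=
  h.unique ((hasDerivAt_branchingMechanism hν hl).congr_of_eventuallyEq
    (Filter.eventually_of_mem (Ioi_mem_nhds hl) fun x hx => hψ x (le_of_lt hx)))

lemma pos_of_setIntegral_Ioi_inv_ne_zero {ψ : ℝ → ℝ} (hα : 0 ≤ α) (hβ : 0 ≤ β)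
    (hν : IsBranchingLevyMeasure ν) (hψ : ∀ x, 0 ≤ x → ψ x = branchingMechanism α β ν x)
    {a : ℝ} (ha : 0 ≤ a) (hne : ∫ u in Ioi a, 1 / ψ u ≠ 0) {l : ℝ} (hl : 0 < l) : 0 < ψ l := by
  rcases branchingMechanism_eq_zero_or_pos hα hβ hν with hzero | hpos
  · refine absurd (setIntegral_eq_zero_of_forall_eq_zero fun u hu => ?_) hne
    rw [hψ u (ha.trans (le_of_lt hu)), hzero, div_zero]
  · rw [hψ l hl.le]
    exact hpos l hl

end BranchingMechanism

lemma setIntegral_Ioi_pos {f : ℝ → ℝ} {a : ℝ} (hf : ∀ u, a < u → 0 < f u)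
    (hint : IntegrableOn f (Ioi a)) : 0 < ∫ u in Ioi a, f u := by
  rw [setIntegral_pos_iff_support_of_nonneg_ae
    (by filter_upwards [ae_restrict_mem measurableSet_Ioi] with u hu using (hf u hu).le) hint]
  have : Function.support f ∩ Ioi a = Ioi a :=
    inter_eq_right.2 fun u hu => (hf u hu).ne'
  simp [this]

lemma setIntegral_Ioi_le_of_le {f : ℝ → ℝ} {a b : ℝ} (hf : ∀ u, a < u → 0 ≤ f u)
    (hint : IntegrableOn f (Ioi a)) (hab : a ≤ b) :
    ∫ u in Ioi b, f u ≤ ∫ u in Ioi a, f u :=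
  setIntegral_mono_set hint
    (by filter_upwards [ae_restrict_mem measurableSet_Ioi] with u hu using hf u hu)
    (Ioi_subset_Ioi hab).eventuallyLE

-- `δ_ψ` is the supremum of the indices `c ≥ 0` for which `WeakLowerScaling ψ c Q` holds with some
-- `Q > 0`.
def WeakLowerScaling (ψ : ℝ → ℝ) (c Q : ℝ) : Prop :=
  ∀ u w : ℝ, 1 ≤ u → u ≤ w → Q * (ψ u * u ^ (-c)) ≤ ψ w * w ^ (-c)

namespace WeakLowerScaling

variable {ψ : ℝ → ℝ} {c Q : ℝ}

lemma mul_rpow_mul_le (h : WeakLowerScaling ψ c Q) {u t : ℝ} (hu : 1 ≤ u) (ht : 1 ≤ t) :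
    Q * t ^ c * ψ u ≤ ψ (t * u) := by
  have hu0 : 0 < u := by linarith
  have ht0 : 0 < t := by linarith
  have hscale := h u (t * u) hu (by nlinarith)
  rw [rpow_neg hu0.le, rpow_neg (by positivity), mul_rpow ht0.le hu0.le] at hscale
  have hpos : 0 < t ^ c * u ^ c := by positivity
  calc Q * t ^ c * ψ u = Q * (ψ u * (u ^ c)⁻¹) * (t ^ c * u ^ c) := by field_simp
    _ ≤ ψ (t * u) * (t ^ c * u ^ c)⁻¹ * (t ^ c * u ^ c) := by gcongr
    _ = ψ (t * u) := by field_simp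

lemma setIntegral_Ioi_inv_le (h : WeakLowerScaling ψ c Q) (hψ : ∀ u, 1 ≤ u → 0 < ψ u)
    (hc : 1 < c) (hQ : 0 < Q) {a : ℝ} (ha : 1 ≤ a) :
    ∫ u in Ioi a, 1 / ψ u ≤ a / ((c - 1) * Q * ψ a) := by
  have ha0 : 0 < a := by linarith
  have hψa := hψ a ha
  set K := Q * (ψ a * a ^ (-c))
  have hK : 0 < K := by positivity
  calc ∫ u in Ioi a, 1 / ψ u ≤ ∫ u in Ioi a, K⁻¹ * u ^ (-c) := by
        refine integral_mono_of_nonneg ?_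
          ((integrableOn_Ioi_rpow_of_lt (by linarith) ha0).const_mul _) ?_
        all_goals filter_upwards [ae_restrict_mem measurableSet_Ioi] with u hu
        · exact (one_div_pos.2 (hψ u (ha.trans hu.le))).le
        · rw [div_le_iff₀ (hψ u (ha.trans hu.le))]
          calc 1 = K⁻¹ * K := (inv_mul_cancel₀ hK.ne').symm
            _ ≤ K⁻¹ * (ψ u * u ^ (-c)) := by gcongr; exact h a u ha hu.le
            _ = K⁻¹ * u ^ (-c) * ψ u := by ring
    _ = K⁻¹ * (a ^ (-c + 1) / (c - 1)) := by
        rw [integral_const_mul, integral_Ioi_rpow_of_lt (by linarith) ha0, neg_div, ← div_neg,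
          neg_add, neg_neg, ← sub_eq_add_neg]
    _ = a / ((c - 1) * Q * ψ a) := by
        simp only [K]
        rw [rpow_add ha0, rpow_one, rpow_neg ha0.le]
        field_simp

lemma exists_mul_setIntegral_Ioi_inv_le (h : WeakLowerScaling ψ c Q)
    (hψ : ∀ u, 1 ≤ u → 0 < ψ u) (hc : 1 < c) (hQ : 0 < Q) :
    ∃ s, 1 ≤ s ∧ ∀ lam, 1 ≤ lam → ψ lam * ∫ u in Ioi (s * lam), 1 / ψ u ≤ lam / 4 := by
  have hc1 : 0 < c - 1 := by linarith
  obtain ⟨s, hs, hs1⟩ := (((tendsto_rpow_atTop hc1).eventually_ge_atTop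
    (4 / ((c - 1) * Q ^ 2))).and (Filter.eventually_ge_atTop 1)).exists
  refine ⟨s, hs1, fun lam hlam => ?_⟩
  have hsl : 1 ≤ s * lam := one_le_mul_of_one_le_of_one_le hs1 hlam
  have hψlam := hψ lam hlam
  have hψsl := hψ _ hsl
  have hsc : s ^ c = s ^ (c - 1) * s := by
    rw [← rpow_add_one (by positivity), sub_add_cancel]
  have hkey : 4 * s * ψ lam ≤ (c - 1) * Q * ψ (s * lam) :=
    calc 4 * s * ψ lam = 4 / ((c - 1) * Q ^ 2) * ((c - 1) * Q ^ 2 * s * ψ lam) := by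
          field_simp
      _ ≤ s ^ (c - 1) * ((c - 1) * Q ^ 2 * s * ψ lam) := by gcongr
      _ = (c - 1) * Q * (Q * s ^ c * ψ lam) := by rw [hsc]; ring
      _ ≤ (c - 1) * Q * ψ (s * lam) := by gcongr; exact h.mul_rpow_mul_le hlam hs1
  calc ψ lam * ∫ u in Ioi (s * lam), 1 / ψ u
      ≤ ψ lam * (s * lam / ((c - 1) * Q * ψ (s * lam))) := by
        gcongr; exact h.setIntegral_Ioi_inv_le hψ hc hQ hsl
    _ ≤ lam / 4 := by
        rw [mul_div_assoc', div_le_div_iff₀ (by positivity) (by norm_num)]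
        nlinarith

lemma exists_mul_le_of_setIntegral_Ioi_eq (h : WeakLowerScaling ψ c Q)
    (hψ : ∀ u, 0 < u → 0 < ψ u) (hint : IntegrableOn (fun u => 1 / ψ u) (Ioi 1))
    (hc : 1 < c) (hQ : 0 < Q) :
    ∃ s, 0 < s ∧ 0 < ∫ u in Ioi s, 1 / ψ u ∧ ∀ a w, 0 < a → 0 < w →
      ∫ u in Ioi w, 1 / ψ u = a → a < ∫ u in Ioi s, 1 / ψ u → a * ψ (w / s) ≤ w / s / 4 := by
  obtain ⟨s, hs1, hs⟩ := h.exists_mul_setIntegral_Ioi_inv_le (fun u hu => hψ u (by linarith)) hc hQ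
  have hs0 : 0 < s := by linarith
  refine ⟨s, hs0, setIntegral_Ioi_pos (fun u hu => one_div_pos.2 (hψ u (by linarith)))
    (hint.mono_set (Ioi_subset_Ioi hs1)), fun a w ha hw hwa has => ?_⟩
  have hsw : s ≤ w := by
    by_contra! hws
    have := setIntegral_Ioi_le_of_le (fun u hu => (one_div_pos.2 (hψ u (hw.trans hu))).le)
      (Integrable.of_integral_ne_zero (hwa.symm ▸ ha.ne')) hws.le
    linarith
  have := hs (w / s) ((one_le_div hs0).2 hsw)
  rwa [mul_div_cancel₀ _ hs0.ne', hwa, mul_comm] at this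

end WeakLowerScaling

theorem control_v_by_gauge_general (α β : ℝ) (hα : 0 ≤ α) (hβ : 0 ≤ β)
    (ν : Measure ℝ) (hν0 : ν (Set.Iic 0) = 0)
    (hνint : Integrable (fun r => min r (r ^ 2)) ν)
    (ψ ψ' ψinv φinv v : ℝ → ℝ)
    (hψ : ∀ l : ℝ, 0 ≤ l →
      ψ l = α * l + β * l ^ 2 + ∫ r, (Real.exp (-(l * r)) - 1 + l * r) ∂ν)
    (hext : IntegrableOn (fun u => 1 / ψ u) (Set.Ioi 1))
    (hderiv : ∀ l : ℝ, 0 < l → HasDerivAt ψ (ψ' l) l)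
    (hinvpos : ∀ l : ℝ, 0 < l → 0 < ψinv l)
    (hinv₁ : ∀ l : ℝ, 0 ≤ l → ψ (ψinv l) = l)
    (hinv₂ : ∀ l : ℝ, 0 ≤ l → ψinv (ψ l) = l)
    (hφinv₁ : ∀ x : ℝ, α ≤ x → 0 ≤ φinv x ∧ ψ' (ψinv (φinv x)) = x)
    -- δ > 1
    (hδ : 1 < sSup {c : ℝ | 0 ≤ c ∧ ∃ Q : ℝ, 0 < Q ∧
      ∀ u w : ℝ, 1 ≤ u → u ≤ w → Q * (ψ u * u ^ (-c)) ≤ ψ w * w ^ (-c)})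
    -- v : (0,∞) → (0,∞) is determined by ∫_{v(a)}^∞ du/ψ(u) = a
    (hv : ∀ a : ℝ, 0 < a → 0 < v a ∧ (∫ u in Set.Ioi (v a), 1 / ψ u) = a) :
    ∃ r₁ : ℝ, 0 < r₁ ∧ ∃ C₁ : ℝ, 0 < C₁ ∧
      ∀ r : ℝ, 0 < r → r < r₁ → v r < C₁ * (r * φinv (1 / r)) := by
  have hν : IsBranchingLevyMeasure ν := ⟨hν0, hνint⟩
  have hψB (l : ℝ) (hl : 0 ≤ l) : ψ l = branchingMechanism α β ν l := hψ l hl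
  have hψpos (l : ℝ) (hl : 0 < l) : 0 < ψ l :=
    pos_of_setIntegral_Ioi_inv_ne_zero hα hβ hν hψB (hv 1 one_pos).1.le
      ((hv 1 one_pos).2.trans_ne one_ne_zero) hl
  have hψinv0 : ψinv 0 = 0 := by simpa [hψ 0 le_rfl] using hinv₂ 0 le_rfl
  obtain ⟨c, ⟨-, Q, hQ, hscale⟩, hc⟩ := exists_lt_of_lt_csSup
    (nonempty_iff_ne_empty.2 fun h => by rw [h, Real.sSup_empty] at hδ; linarith) hδ
  obtain ⟨s, hs0, hI, hs⟩ := WeakLowerScaling.exists_mul_le_of_setIntegral_Ioi_eq hscale hψpos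
    hext hc hQ
  -- `r < 1 / (1 + |ψ' 0|)` keeps `1 / r` away from the junk value `ψ' 0 = ψ' (ψinv 0)`,
  -- which forces `φinv (1 / r) ≠ 0`.
  set M := max α |ψ' 0|
  refine ⟨min (1 / (1 + M)) (∫ u in Ioi s, 1 / ψ u), lt_min (by positivity) hI, 8 * s + 1,
    by positivity, fun r hr hr₁ => ?_⟩
  have hMr : 1 + M < 1 / r := (lt_one_div (by positivity) hr).2 (hr₁.trans_le (min_le_left _ _))
  obtain ⟨hm0, hm⟩ := hφinv₁ (1 / r) (by linarith [le_max_left α |ψ' 0|])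
  have hmpos : 0 < φinv (1 / r) := hm0.lt_of_ne fun h0 => by
    rw [← h0, hψinv0] at hm
    linarith [le_abs_self (ψ' 0), le_max_right α |ψ' 0|]
  have hℓ := hinvpos _ hmpos
  obtain ⟨hvr, hvr_int⟩ := hv r hr
  have hquarter := hs r (v r) hr hvr hvr_int (hr₁.trans_le (min_le_right _ _))
  rw [hψB _ (by positivity)] at hquarter
  have hmain := le_eight_mul_of_branchingMechanismDeriv_eq_inv hα hβ hν hℓ hr
    (by rw [← (hderiv _ hℓ).eq_branchingMechanismDeriv hν hψB hℓ, hm]) hquarter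
  rw [← hψB _ hℓ.le, hinv₁ _ hm0, div_le_iff₀ hs0] at hmain
  nlinarith [mul_pos hr hmpos]

/-- Lemma: control of v by the gauge: if δ_ψ > 1, then there exist
r₁, C₁ > 0 with v(r) < C₁ r φ⁻¹(1/r) for all r ∈ (0, r₁), where v is determined by
∫_{v(a)}^∞ du/ψ(u) = a and φ = ψ' ∘ ψ⁻¹. -/
theorem control_v_by_gauge (α β : ℝ) (hα : 0 ≤ α) (hβ : 0 ≤ β)
    (ν : Measure ℝ) (hν0 : ν (Set.Iic 0) = 0)
    (hνint : Integrable (fun r => min r (r ^ 2)) ν)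
    (ψ ψ' ψinv φinv v : ℝ → ℝ)
    (hψ : ∀ l : ℝ, 0 ≤ l →
      ψ l = α * l + β * l ^ 2 + ∫ r, (Real.exp (-(l * r)) - 1 + l * r) ∂ν)
    (hext : IntegrableOn (fun u => 1 / ψ u) (Set.Ioi 1))
    (hderiv : ∀ l : ℝ, 0 < l → HasDerivAt ψ (ψ' l) l)
    (hinvpos : ∀ l : ℝ, 0 < l → 0 < ψinv l)
    (hinv₁ : ∀ l : ℝ, 0 ≤ l → ψ (ψinv l) = l)
    (hinv₂ : ∀ l : ℝ, 0 ≤ l → ψinv (ψ l) = l)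
    (hφinv₁ : ∀ x : ℝ, α ≤ x → 0 ≤ φinv x ∧ ψ' (ψinv (φinv x)) = x)
    (hφinv₂ : ∀ l : ℝ, 0 ≤ l → φinv (ψ' (ψinv l)) = l)
    -- δ > 1
    (hδ : 1 < sSup {c : ℝ | 0 ≤ c ∧ ∃ Q : ℝ, 0 < Q ∧
      ∀ u w : ℝ, 1 ≤ u → u ≤ w → Q * (ψ u * u ^ (-c)) ≤ ψ w * w ^ (-c)})
    -- v : (0,∞) → (0,∞) is determined by ∫_{v(a)}^∞ du/ψ(u) = a
    (hv : ∀ a : ℝ, 0 < a → 0 < v a ∧ (∫ u in Set.Ioi (v a), 1 / ψ u) = a) :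
    ∃ r₁ : ℝ, 0 < r₁ ∧ ∃ C₁ : ℝ, 0 < C₁ ∧
      ∀ r : ℝ, 0 < r → r < r₁ → v r < C₁ * (r * φinv (1 / r)) :=
  control_v_by_gauge_general α β hα hβ ν hν0 hνint ψ ψ' ψinv φinv v hψ hext hderiv hinvpos hinv₁
    hinv₂ hφinv₁ hδ hv
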